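/- Assume the generalised Hamiltonian GBDT setup, together with A·S(0) − S(0)·A* = i·Π(0)·j·Π(0)*, S(0) = S(0)*, and S(x) invertible for all x in an interval 𝓘 containing 0; define w_A, β̃ₖ, H̃ₖ as in Theorem 3.1. Then for all x ∈ 𝓘 the function x ↦ Π(x)*·S(x)⁻¹·Π(x) is differentiable and (Π(x)*·S(x)⁻¹·Π(x))′ = Σ_{k=1}^r (H̃ₖ(x) − Hₖ(x)). -/

import Mathlib

open Matrix

attribute [local instance] Matrix.normedAddCommGroup Matrix.normedSpace

/-- The signature matrix `j = diag(I_{m₁}, −I_{m₂})`. -/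
def Jmat (m₁ m₂ : ℕ) : Matrix (Fin m₁ ⊕ Fin m₂) (Fin m₁ ⊕ Fin m₂) ℂ :=
  Matrix.fromBlocks 1 0 0 (-1)

/-- The transfer matrix function
`w_A(x,z) = I_m − i j Π(x)* S(x)⁻¹ (A − zIₙ)⁻¹ Π(x)` (formula (c8)). -/
noncomputable def wA {m₁ m₂ n : ℕ} (A : Matrix (Fin n) (Fin n) ℂ)
    (P : ℝ → Matrix (Fin n) (Fin m₁ ⊕ Fin m₂) ℂ) (S : ℝ → Matrix (Fin n) (Fin n) ℂ)
    (x : ℝ) (z : ℂ) : Matrix (Fin m₁ ⊕ Fin m₂) (Fin m₁ ⊕ Fin m₂) ℂ :=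
  1 - Complex.I • (Jmat m₁ m₂ * (P x)ᴴ * (S x)⁻¹ * (A - z • 1)⁻¹ * P x)

/-- The transformed `β̃ₖ(x) = βₖ(x) j w_A(x,cₖ)* j` (formula (c13)). -/
noncomputable def betaTil {m₁ m₂ n p r : ℕ} (c : Fin r → ℝ)
    (A : Matrix (Fin n) (Fin n) ℂ)
    (β : Fin r → ℝ → Matrix (Fin p) (Fin m₁ ⊕ Fin m₂) ℂ)
    (P : ℝ → Matrix (Fin n) (Fin m₁ ⊕ Fin m₂) ℂ) (S : ℝ → Matrix (Fin n) (Fin n) ℂ)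
    (k : Fin r) (x : ℝ) : Matrix (Fin p) (Fin m₁ ⊕ Fin m₂) ℂ :=
  β k x * Jmat m₁ m₂ * (wA A P S x ((c k : ℂ)))ᴴ * Jmat m₁ m₂

/-- The transformed Hamiltonian `H̃ₖ(x) = β̃ₖ(x)* β̃ₖ(x)` (formula (c13)). -/
noncomputable def Htil {m₁ m₂ n p r : ℕ} (c : Fin r → ℝ)
    (A : Matrix (Fin n) (Fin n) ℂ)
    (β : Fin r → ℝ → Matrix (Fin p) (Fin m₁ ⊕ Fin m₂) ℂ)
    (P : ℝ → Matrix (Fin n) (Fin m₁ ⊕ Fin m₂) ℂ) (S : ℝ → Matrix (Fin n) (Fin n) ℂ)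
    (k : Fin r) (x : ℝ) : Matrix (Fin m₁ ⊕ Fin m₂) (Fin m₁ ⊕ Fin m₂) ℂ :=
  (betaTil c A β P S k x)ᴴ * betaTil c A β P S k x

/-! Since `S′` and `S(0)` are Hermitian, so is `S(x)` for every `x`. Writing
`Xₖ = Π* S⁻¹ (A − cₖ)⁻¹ Π j`, the product rule with `(S⁻¹)′ = −S⁻¹ S′ S⁻¹` gives
`(Π* S⁻¹ Π)′ = Σₖ (i Hₖ Xₖ* − i Xₖ Hₖ + Xₖ Hₖ Xₖ*)`. On the other side `j w_A(x,cₖ) j = 1 − i Xₖ`,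
so `H̃ₖ = (1 − i Xₖ) Hₖ (1 − i Xₖ)*`, and expanding this gives the same summand plus `Hₖ`. -/

open Topology Complex

section MatrixCalculus

variable {l m n : Type*} [Fintype l] [Fintype m] [Fintype n] {x : ℝ}

theorem HasDerivAt.matrix_mul {f : ℝ → Matrix l m ℂ} {g : ℝ → Matrix m n ℂ}
    {f' : Matrix l m ℂ} {g' : Matrix m n ℂ} (hf : HasDerivAt f f' x) (hg : HasDerivAt g g' x) :
    HasDerivAt (fun t => f t * g t) (f' * g x + f x * g') x := by
  rw [add_comm]
  exact (mulLinearMap ℝ).toContinuousBilinearMap.hasDerivAt_of_bilinear (fun _ => hf) fun _ => hg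

theorem HasDerivAt.matrix_conjTranspose {f : ℝ → Matrix l m ℂ} {f' : Matrix l m ℂ}
    (hf : HasDerivAt f f' x) : HasDerivAt (fun t => (f t)ᴴ) f'ᴴ x :=
  hasDerivAt_pi.2 fun i => hasDerivAt_pi.2 fun j =>
    (hasDerivAt_pi.1 (hasDerivAt_pi.1 hf j) i).star

theorem HasDerivAt.matrix_inv [DecidableEq m] {S : ℝ → Matrix m m ℂ} {S' : Matrix m m ℂ}
    (hS : HasDerivAt S S' x) (hx : IsUnit (S x)) :
    HasDerivAt (fun t => (S t)⁻¹) (-((S x)⁻¹ * S' * (S x)⁻¹)) x := by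
  have hdet : (S x).det ≠ 0 := ((isUnit_iff_isUnit_det _).1 hx).ne_zero
  have hinv : ContinuousAt (fun t => (S t)⁻¹) x :=
    (continuousAt_matrix_inv _ (by simpa using continuousAt_inv₀ hdet)).comp hS.continuousAt
  have hdet_ne : ∀ᶠ t in 𝓝[≠] x, (S t).det ≠ 0 := nhdsWithin_le_nhds <|
    (continuous_id.matrix_det.continuousAt.comp hS.continuousAt).eventually_ne hdet
  refine hasDerivAt_iff_tendsto_slope.2 <|
    (((hinv.tendsto.mono_left nhdsWithin_le_nhds).mul hS.tendsto_slope).mul_const _).neg.congr' ?_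
  filter_upwards [hdet_ne] with t ht
  -- `S(t)⁻¹ - S(x)⁻¹ = -S(t)⁻¹ (S(t) - S(x)) S(x)⁻¹`
  rw [slope_def_module, slope_def_module, Matrix.mul_smul, Matrix.smul_mul, ← smul_neg,
    Matrix.mul_sub, Matrix.sub_mul, nonsing_inv_mul _ (isUnit_iff_ne_zero.2 ht), Matrix.mul_assoc,
    mul_nonsing_inv _ ((isUnit_iff_isUnit_det _).1 hx), Matrix.one_mul, Matrix.mul_one, neg_sub]

theorem HasDerivAt.conjTranspose_mul_inv_mul [DecidableEq n] {P : ℝ → Matrix n m ℂ}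
    {S : ℝ → Matrix n n ℂ} {P' : Matrix n m ℂ} {S' : Matrix n n ℂ}
    (hP : HasDerivAt P P' x) (hS : HasDerivAt S S' x) (hx : IsUnit (S x)) :
    HasDerivAt (fun t => (P t)ᴴ * (S t)⁻¹ * P t)
      (P'ᴴ * (S x)⁻¹ * P x - (P x)ᴴ * ((S x)⁻¹ * S' * (S x)⁻¹) * P x + (P x)ᴴ * (S x)⁻¹ * P') x := by
  convert (hP.matrix_conjTranspose.matrix_mul (hS.matrix_inv hx)).matrix_mul hP using 1
  simp only [Matrix.add_mul, Matrix.mul_neg, Matrix.neg_mul, sub_eq_add_neg]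

theorem Matrix.IsHermitian.of_hasDerivAt {S S' : ℝ → Matrix m m ℂ}
    (hS : ∀ t, HasDerivAt S (S' t) t) (hS' : ∀ t, (S' t).IsHermitian) (h₀ : (S 0).IsHermitian)
    (t : ℝ) : (S t).IsHermitian := by
  have hderiv : ∀ u, HasDerivAt (fun u => (S u)ᴴ - S u) 0 u := fun u => by
    have h := (hS u).matrix_conjTranspose.fun_sub (hS u)
    rwa [(hS' u).eq, sub_self] at h
  have hconst := is_const_of_deriv_eq_zero (fun u => (hderiv u).differentiableAt)
    (fun u => (hderiv u).deriv) t 0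
  rwa [h₀.eq, sub_self, sub_eq_zero] at hconst

end MatrixCalculus

theorem one_sub_I_smul_mul_mul_star_sub {R : Type*} [Ring R] [StarRing R] [Algebra ℂ R]
    [StarModule ℂ R] (X H : R) :
    (1 - I • X) * H * star (1 - I • X) - H = I • (H * star X) - I • (X * H) + X * H * star X := by
  have hstar : star (1 - I • X) = 1 + I • star X := by
    simp [star_smul, conj_I, sub_eq_add_neg]
  rw [hstar]
  simp only [mul_add, sub_mul, one_mul, mul_one, smul_mul_assoc, mul_smul_comm]
  match_scalars <;> ring_nf
  simp [I_sq]

theorem conjTranspose_inv_sub_ofReal_smul_one {n : Type*} [Fintype n] [DecidableEq n]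
    (A : Matrix n n ℂ) (c : ℝ) : ((A - (c : ℂ) • 1)⁻¹)ᴴ = (Aᴴ - (c : ℂ) • 1)⁻¹ := by
  simp [conjTranspose_nonsing_inv, conjTranspose_sub]

theorem Jmat_conjTranspose (m₁ m₂ : ℕ) : (Jmat m₁ m₂)ᴴ = Jmat m₁ m₂ := by
  simp [Jmat, fromBlocks_conjTranspose]

theorem Jmat_mul_self (m₁ m₂ : ℕ) : Jmat m₁ m₂ * Jmat m₁ m₂ = 1 := by
  simp [Jmat, fromBlocks_multiply, ← fromBlocks_one]

theorem Jmat_mul_wA_mul_Jmat {m₁ m₂ n : ℕ} (A : Matrix (Fin n) (Fin n) ℂ)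
    (P : ℝ → Matrix (Fin n) (Fin m₁ ⊕ Fin m₂) ℂ) (S : ℝ → Matrix (Fin n) (Fin n) ℂ)
    (x : ℝ) (z : ℂ) :
    Jmat m₁ m₂ * wA A P S x z * Jmat m₁ m₂
      = 1 - I • ((P x)ᴴ * (S x)⁻¹ * (A - z • 1)⁻¹ * P x * Jmat m₁ m₂) := by
  simp only [wA, Matrix.mul_sub, Matrix.sub_mul, Matrix.mul_one, Jmat_mul_self, Matrix.mul_smul,
    Matrix.smul_mul, ← Matrix.mul_assoc, Matrix.one_mul]

theorem Htil_eq {m₁ m₂ n p r : ℕ} (c : Fin r → ℝ) (A : Matrix (Fin n) (Fin n) ℂ)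
    (β : Fin r → ℝ → Matrix (Fin p) (Fin m₁ ⊕ Fin m₂) ℂ)
    (P : ℝ → Matrix (Fin n) (Fin m₁ ⊕ Fin m₂) ℂ) (S : ℝ → Matrix (Fin n) (Fin n) ℂ)
    (k : Fin r) (x : ℝ) :
    Htil c A β P S k x = Jmat m₁ m₂ * wA A P S x (c k) * Jmat m₁ m₂ * ((β k x)ᴴ * β k x) *
      (Jmat m₁ m₂ * wA A P S x (c k) * Jmat m₁ m₂)ᴴ := by
  simp only [Htil, betaTil, conjTranspose_mul, conjTranspose_conjTranspose, Jmat_conjTranspose,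
    Matrix.mul_assoc]

theorem gbdt_conservation_law_general {m₁ m₂ n p r : ℕ}
    (c : Fin r → ℝ)
    (A : Matrix (Fin n) (Fin n) ℂ)
    (β : Fin r → ℝ → Matrix (Fin p) (Fin m₁ ⊕ Fin m₂) ℂ)
    (P : ℝ → Matrix (Fin n) (Fin m₁ ⊕ Fin m₂) ℂ)
    (S : ℝ → Matrix (Fin n) (Fin n) ℂ)
    (hP : ∀ x : ℝ, HasDerivAt P
      (-(Complex.I • ∑ k : Fin r,
        (A - (c k : ℂ) • 1)⁻¹ * P x * (Jmat m₁ m₂ * ((β k x)ᴴ * β k x)))) x)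
    (hS : ∀ x : ℝ, HasDerivAt S
      (-(∑ k : Fin r,
        (A - (c k : ℂ) • 1)⁻¹ * P x * (Jmat m₁ m₂ * ((β k x)ᴴ * β k x)) * Jmat m₁ m₂ *
          (P x)ᴴ * (Aᴴ - (c k : ℂ) • 1)⁻¹)) x)
    (hS0h : (S 0)ᴴ = S 0)
    (𝓘 : Set ℝ) (hSinv : ∀ x ∈ 𝓘, IsUnit (S x)) :
    ∀ x ∈ 𝓘, HasDerivAt (fun t => (P t)ᴴ * (S t)⁻¹ * P t)
      (∑ k : Fin r, (Htil c A β P S k x - (β k x)ᴴ * β k x)) x := by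
  have hS_herm : ∀ t, (S t).IsHermitian := by
    refine IsHermitian.of_hasDerivAt hS (fun t => ?_) hS0h
    simp only [IsHermitian, conjTranspose_neg, conjTranspose_sum, conjTranspose_mul,
      conjTranspose_conjTranspose, conjTranspose_inv_sub_ofReal_smul_one, Jmat_conjTranspose,
      Matrix.mul_assoc]
  intro x hx
  have hT : ((S x)⁻¹)ᴴ = (S x)⁻¹ := (hS_herm x).inv
  convert (hP x).conjTranspose_mul_inv_mul (hS x) (hSinv x hx) using 1
  simp only [Htil_eq, Jmat_mul_wA_mul_Jmat, ← star_eq_conjTranspose,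
    one_sub_I_smul_mul_mul_star_sub]
  simp only [star_eq_conjTranspose, conjTranspose_neg, conjTranspose_smul, conjTranspose_sum,
    conjTranspose_mul, conjTranspose_conjTranspose, conjTranspose_inv_sub_ofReal_smul_one, hT,
    Jmat_conjTranspose, star_def, conj_I, Matrix.sum_mul, Matrix.mul_sum, Finset.smul_sum,
    Matrix.neg_mul, Matrix.mul_neg, Matrix.smul_mul, Matrix.mul_smul, neg_smul, neg_neg,
    Matrix.mul_assoc, Finset.sum_add_distrib, Finset.sum_sub_distrib, Finset.sum_neg_distrib, ← sub_eq_add_neg]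
  abel

/-- Proposition 4.4, a conservation law. Under the hypotheses of
Theorem 3.1, the function `x ↦ Π(x)* S(x)⁻¹ Π(x)` is differentiable on `𝓘` with
`(Π(x)* S(x)⁻¹ Π(x))′ = Σₖ (H̃ₖ(x) − Hₖ(x))`. -/
theorem gbdt_conservation_law {m₁ m₂ n p r : ℕ} (hm : 0 < m₁ + m₂) (hr : 1 ≤ r)
    (c : Fin r → ℝ) (hc : Function.Injective c)
    (A : Matrix (Fin n) (Fin n) ℂ)
    (hA : ∀ k, IsUnit (A - (c k : ℂ) • (1 : Matrix (Fin n) (Fin n) ℂ)))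
    (β : Fin r → ℝ → Matrix (Fin p) (Fin m₁ ⊕ Fin m₂) ℂ)
    (hβ : ∀ k, Continuous (β k))
    (P : ℝ → Matrix (Fin n) (Fin m₁ ⊕ Fin m₂) ℂ)
    (S : ℝ → Matrix (Fin n) (Fin n) ℂ)
    (hP : ∀ x : ℝ, HasDerivAt P
      (-(Complex.I • ∑ k : Fin r,
        (A - (c k : ℂ) • 1)⁻¹ * P x * (Jmat m₁ m₂ * ((β k x)ᴴ * β k x)))) x)
    (hS : ∀ x : ℝ, HasDerivAt S
      (-(∑ k : Fin r,
        (A - (c k : ℂ) • 1)⁻¹ * P x * (Jmat m₁ m₂ * ((β k x)ᴴ * β k x)) * Jmat m₁ m₂ *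
          (P x)ᴴ * (Aᴴ - (c k : ℂ) • 1)⁻¹)) x)
    (hS0 : A * S 0 - S 0 * Aᴴ = Complex.I • (P 0 * Jmat m₁ m₂ * (P 0)ᴴ))
    (hS0h : (S 0)ᴴ = S 0)
    (𝓘 : Set ℝ) (h0 : (0 : ℝ) ∈ 𝓘) (hSinv : ∀ x ∈ 𝓘, IsUnit (S x)) :
    ∀ x ∈ 𝓘, HasDerivAt (fun t => (P t)ᴴ * (S t)⁻¹ * P t)
      (∑ k : Fin r, (Htil c A β P S k x - (β k x)ᴴ * β k x)) x :=
  gbdt_conservation_law_general c A β P S hP hS hS0h 𝓘 hSinv
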